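/- Let j be a 1-periodic, odd, bounded, piecewise continuous function on ℝ, let f_0 be continuous on [1/2,1], and let f_n = T^n f_0, where (Tf)(x) = f(1/(2−x))/(2−x)² − f(1/(1+x))/(1+x)². Then for every n ≥ 0: ∫_{1/2}^{1} j(2^n ?(x)) f_0(x) dx = ∫_{1/2}^{1} j(?(x)) f_n(x) dx, where ? is the Minkowski question mark function. -/

import Mathlib

/-!
The functional equations of `?` turn one doubling of the argument of `j` into one application
of `T`. Split `[1/2, 1]` at `2/3` and substitute `x = 1/(2-u)` on `[2/3, 1]` and `x = 1/(1+u)`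
on `[1/2, 2/3]`, with `u ∈ [1/2, 1]`. Since `?(1/(2-u)) = (1 + ?(u))/2` and
`?(1/(1+u)) = 1 - ?(u)/2`, periodicity and oddness give `j(2 ?(x)) = ± j(?(u))`, and the two
Jacobians `1/(2-u)²`, `1/(1+u)²` assemble into `T f`. Induction on `n` then applies this to
`x ↦ j(2^n x)`, which is again odd and 1-periodic.

The two functional equations come from the self-similarity of the Stern–Brocot sequences:
`ξ_{j,n+1} = ξ_{j,n}/(1+ξ_{j,n})` for `j ≤ 2^n` and `ξ_{2^n-j,n} = 1 - ξ_{j,n}`. Both are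
checked on numerators and denominators, which are those of the mediant because consecutive
terms are Farey neighbours.
-/

/-- The mediant of two rationals, formed from numerators and denominators
of the reduced fractions. -/
def mediant (a b : ℚ) : ℚ := ((a.num + b.num : ℤ) : ℚ) / ((a.den + b.den : ℕ) : ℚ)

/-- `sb n j` is the `j`-th element `ξ_{j,n}` of the Stern–Brocot sequence `F_n`:
`F_0 = {0/1, 1/1}` and `F_{n+1}` is obtained from `F_n` by inserting the mediant
between every pair of consecutive elements. -/
def sb : ℕ → ℕ → ℚ
  | 0, j => if j = 0 then 0 else 1
  | n + 1, j => if j % 2 = 0 then sb n (j / 2) else mediant (sb n (j / 2)) (sb n (j / 2 + 1))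

open scoped Classical in
/-- The Minkowski question mark function, defined (as in the paper) as the limit
distribution function of the Stern–Brocot sequences:
`?(x) = lim_n |F_n ∩ [0,x]| / 2^n = sup { j/2^n : ξ_{j,n} ≤ x }`. -/
noncomputable def questionMark (x : ℝ) : ℝ :=
  sSup {y : ℝ | ∃ n j : ℕ, j ≤ 2 ^ n ∧ ((sb n j : ℝ) ≤ x) ∧ y = (j : ℝ) / 2 ^ n}

/-- The operator `T` on functions on `[1/2,1]`:
`(Tf)(x) = f(1/(2−x))/(2−x)² − f(1/(1+x))/(1+x)²`.
(For `x ∈ [1/2,1]` both `1/(2−x)` and `1/(1+x)` lie in `[1/2,1]`.) -/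
noncomputable def T (f : ℝ → ℝ) : ℝ → ℝ := fun x =>
  f (1 / (2 - x)) / (2 - x) ^ 2 - f (1 / (1 + x)) / (1 + x) ^ 2

open Set

lemma Rat.num_den_eq_of_eq_div {q : ℚ} {p d : ℤ} (hd : 0 < d) (hpd : IsCoprime p d)
    (hq : q = p / d) : q.num = p ∧ (q.den : ℤ) = d := by
  have hc : Nat.Coprime p.natAbs d.natAbs := Int.isCoprime_iff_gcd_eq_one.mp hpd
  subst hq
  exact ⟨Rat.num_div_eq_of_coprime hd hc, Rat.den_div_eq_of_coprime hd hc⟩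

lemma Rat.num_den_div_one_add {a : ℚ} (ha : 0 ≤ a) :
    (a / (1 + a)).num = a.num ∧ ((a / (1 + a)).den : ℤ) = a.num + a.den := by
  obtain ⟨u, v, huv⟩ := a.isCoprime_num_den
  refine Rat.num_den_eq_of_eq_div (by have := Rat.num_nonneg.mpr ha; positivity)
    ⟨u - v, v, by linear_combination huv⟩ ?_
  rw [div_eq_div_iff (by positivity) (by push_cast; positivity)]
  push_cast
  linear_combination a.mul_den_eq_num

lemma Rat.num_den_one_sub (a : ℚ) :
    (1 - a).num = a.den - a.num ∧ ((1 - a).den : ℤ) = a.den := by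
  obtain ⟨u, v, huv⟩ := a.isCoprime_num_den
  refine Rat.num_den_eq_of_eq_div (by positivity) ⟨-u, u + v, by linear_combination huv⟩ ?_
  rw [eq_div_iff (by positivity)]
  push_cast
  linear_combination -a.mul_den_eq_num

lemma mediant_eq (a b : ℚ) : mediant a b = (a.num + b.num) / (a.den + b.den) := by
  simp [mediant]

lemma mediant_nonneg {a b : ℚ} (ha : 0 ≤ a) (hb : 0 ≤ b) : 0 ≤ mediant a b := by
  have ha' := Rat.num_nonneg.mpr ha
  have hb' := Rat.num_nonneg.mpr hb
  rw [mediant_eq]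
  positivity

lemma mediant_div_one_add {a b : ℚ} (ha : 0 ≤ a) (hb : 0 ≤ b) :
    mediant (a / (1 + a)) (b / (1 + b)) = mediant a b / (1 + mediant a b) := by
  obtain ⟨hna, hda⟩ := Rat.num_den_div_one_add ha
  obtain ⟨hnb, hdb⟩ := Rat.num_den_div_one_add hb
  have ha' := Rat.num_nonneg.mpr ha
  have hb' := Rat.num_nonneg.mpr hb
  have hd : (0 : ℚ) < a.num + b.num + (a.den + b.den) := by positivity
  have hda' : ((a / (1 + a)).den : ℚ) = a.num + a.den := by exact_mod_cast hda
  have hdb' : ((b / (1 + b)).den : ℚ) = b.num + b.den := by exact_mod_cast hdb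
  rw [mediant_eq, mediant_eq, hna, hnb, hda', hdb']
  field_simp
  ring

lemma mediant_one_sub (a b : ℚ) : mediant (1 - b) (1 - a) = 1 - mediant a b := by
  obtain ⟨hna, hda⟩ := Rat.num_den_one_sub a
  obtain ⟨hnb, hdb⟩ := Rat.num_den_one_sub b
  have hda' : ((1 - a).den : ℚ) = a.den := by exact_mod_cast hda
  have hdb' : ((1 - b).den : ℚ) = b.den := by exact_mod_cast hdb
  rw [mediant_eq, mediant_eq, hna, hnb, hda', hdb']
  field_simp
  push_cast
  ring

def FareyNeighbours (a b : ℚ) : Prop := (a.den : ℤ) * b.num - a.num * b.den = 1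

namespace FareyNeighbours

variable {a b : ℚ}

lemma num_den_mediant (h : FareyNeighbours a b) :
    (mediant a b).num = a.num + b.num ∧ ((mediant a b).den : ℤ) = a.den + b.den :=
  Rat.num_den_eq_of_eq_div (by positivity)
    ⟨a.den, -a.num, by unfold FareyNeighbours at h; linear_combination h⟩
    (by rw [mediant_eq]; push_cast; rfl)

lemma lt (h : FareyNeighbours a b) : a < b := by
  rw [← a.num_div_den, ← b.num_div_den, div_lt_div_iff₀ (by positivity) (by positivity)]
  have : a.num * b.den < b.num * a.den := by unfold FareyNeighbours at h; linarith
  exact_mod_cast this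

lemma mediant_left (h : FareyNeighbours a b) : FareyNeighbours a (mediant a b) := by
  obtain ⟨hnum, hden⟩ := h.num_den_mediant
  unfold FareyNeighbours at *
  rw [hnum, hden]
  linear_combination h

lemma mediant_right (h : FareyNeighbours a b) : FareyNeighbours (mediant a b) b := by
  obtain ⟨hnum, hden⟩ := h.num_den_mediant
  unfold FareyNeighbours at *
  rw [hnum, hden]
  linear_combination h

end FareyNeighbours

@[simp]
lemma sb_two_mul (n i : ℕ) : sb (n + 1) (2 * i) = sb n i := by
  simp [sb]

@[simp]
lemma sb_two_mul_add_one (n i : ℕ) :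
    sb (n + 1) (2 * i + 1) = mediant (sb n i) (sb n (i + 1)) := by
  simp [sb, Nat.add_mod, Nat.add_div]

@[simp]
lemma sb_apply_zero (n : ℕ) : sb n 0 = 0 := by
  induction n with
  | zero => rfl
  | succ n ih => simpa [ih] using sb_two_mul n 0

@[simp]
lemma sb_apply_two_pow (n : ℕ) : sb n (2 ^ n) = 1 := by
  induction n with
  | zero => rfl
  | succ n ih => rw [pow_succ', sb_two_mul, ih]

lemma sb_two_pow_mul (n m j : ℕ) : sb (n + m) (2 ^ m * j) = sb n j := by
  induction m with
  | zero => simp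
  | succ m ih => rw [pow_succ', mul_assoc, ← add_assoc, sb_two_mul, ih]

lemma sb_nonneg (n j : ℕ) : 0 ≤ sb n j := by
  induction n generalizing j with
  | zero => unfold sb; split_ifs <;> norm_num
  | succ n ih =>
    obtain ⟨i, rfl | rfl⟩ := Nat.even_or_odd' j
    · simpa using ih i
    · simpa using mediant_nonneg (ih i) (ih (i + 1))

lemma sb_fareyNeighbours {n j : ℕ} (hj : j < 2 ^ n) : FareyNeighbours (sb n j) (sb n (j + 1)) := by
  induction n generalizing j with
  | zero =>
    obtain rfl : j = 0 := by simpa using hj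
    rfl
  | succ n ih =>
    obtain ⟨i, rfl | rfl⟩ := Nat.even_or_odd' j
    · simpa using (ih (by omega : i < 2 ^ n)).mediant_left
    · rw [show 2 * i + 1 + 1 = 2 * (i + 1) by ring, sb_two_mul_add_one, sb_two_mul]
      exact (ih (by omega : i < 2 ^ n)).mediant_right

lemma sb_strictMonoOn (n : ℕ) : StrictMonoOn (sb n) (Iic (2 ^ n)) :=
  strictMonoOn_Iic_of_lt_succ fun j hj => by
    simpa [Order.succ_eq_add_one] using (sb_fareyNeighbours hj).lt

lemma sb_succ_of_le {n j : ℕ} (hj : j ≤ 2 ^ n) : sb (n + 1) j = sb n j / (1 + sb n j) := by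
  induction n generalizing j with
  | zero => interval_cases j <;> norm_num [sb, mediant]
  | succ n ih =>
    obtain ⟨i, rfl | rfl⟩ := Nat.even_or_odd' j
    · rw [sb_two_mul, sb_two_mul, ih (by omega)]
    · rw [sb_two_mul_add_one, sb_two_mul_add_one, ih (by omega), ih (by omega),
        mediant_div_one_add (sb_nonneg n i) (sb_nonneg n (i + 1))]

lemma sb_two_pow_sub {n j : ℕ} (hj : j ≤ 2 ^ n) : sb n (2 ^ n - j) = 1 - sb n j := by
  induction n generalizing j with
  | zero => interval_cases j <;> norm_num [sb]
  | succ n ih =>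
    obtain ⟨i, rfl | rfl⟩ := Nat.even_or_odd' j
    · rw [show 2 ^ (n + 1) - 2 * i = 2 * (2 ^ n - i) by rw [pow_succ']; omega, sb_two_mul,
        sb_two_mul, ih (by omega)]
    · rw [show 2 ^ (n + 1) - (2 * i + 1) = 2 * (2 ^ n - (i + 1)) + 1 by rw [pow_succ']; omega,
        sb_two_mul_add_one, sb_two_mul_add_one, show 2 ^ n - (i + 1) + 1 = 2 ^ n - i by omega,
        ih (by omega), ih (by omega), mediant_one_sub]

lemma div_two_pow_le_one {n j : ℕ} (hj : j ≤ 2 ^ n) : (j : ℝ) / 2 ^ n ≤ 1 := by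
  rw [div_le_one (by positivity)]
  exact_mod_cast hj

lemma bddAbove_questionMark_set (x : ℝ) :
    BddAbove {y : ℝ | ∃ n j : ℕ, j ≤ 2 ^ n ∧ ((sb n j : ℝ) ≤ x) ∧ y = (j : ℝ) / 2 ^ n} :=
  ⟨1, by rintro _ ⟨n, j, hj, -, rfl⟩; exact div_two_pow_le_one hj⟩

lemma le_questionMark {x : ℝ} {n j : ℕ} (hj : j ≤ 2 ^ n) (hx : (sb n j : ℝ) ≤ x) :
    (j : ℝ) / 2 ^ n ≤ questionMark x :=
  le_csSup (bddAbove_questionMark_set x) ⟨n, j, hj, hx, rfl⟩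

lemma questionMark_le {x c : ℝ} (hc : 0 ≤ c)
    (h : ∀ n j : ℕ, j ≤ 2 ^ n → (sb n j : ℝ) ≤ x → (j : ℝ) / 2 ^ n ≤ c) : questionMark x ≤ c :=
  Real.sSup_le (by rintro _ ⟨n, j, hj, hx, rfl⟩; exact h n j hj hx) hc

lemma questionMark_le_of_succ {x c : ℝ} (hc : 0 ≤ c)
    (h : ∀ n j : ℕ, j ≤ 2 ^ (n + 1) → (sb (n + 1) j : ℝ) ≤ x → (j : ℝ) / 2 ^ (n + 1) ≤ c) :
    questionMark x ≤ c := by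
  refine questionMark_le hc fun n j hj hx => ?_
  have := h n (2 * j) (by rw [pow_succ']; omega) (by rwa [sb_two_mul])
  rwa [Nat.cast_mul, pow_succ', Nat.cast_two, mul_div_mul_left _ _ two_ne_zero] at this

lemma questionMark_nonneg (x : ℝ) : 0 ≤ questionMark x :=
  Real.sSup_nonneg (by rintro _ ⟨n, j, -, -, rfl⟩; positivity)

lemma questionMark_le_one (x : ℝ) : questionMark x ≤ 1 :=
  questionMark_le zero_le_one fun _ _ hj _ => div_two_pow_le_one hj

lemma questionMark_mono : Monotone questionMark := fun _ y hxy =>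
  questionMark_le (questionMark_nonneg y) fun _ _ hj hx => le_questionMark hj (hx.trans hxy)

lemma div_two_pow_add_div_two_pow_le_one {n m j i : ℕ} (hj : j ≤ 2 ^ n) (hi : i ≤ 2 ^ m)
    (h : (sb n j : ℝ) + sb m i ≤ 1) : (j : ℝ) / 2 ^ n + i / 2 ^ m ≤ 1 := by
  have hJ : 2 ^ m * j ≤ 2 ^ (n + m) := by
    rw [pow_add, mul_comm (2 ^ n)]
    exact Nat.mul_le_mul_left _ hj
  have hI : 2 ^ n * i ≤ 2 ^ (n + m) := by rw [pow_add]; exact Nat.mul_le_mul_left _ hi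
  -- Compare both indices at level `n + m`, where the symmetry of `sb` rules out an overlap.
  have hsum : 2 ^ m * j + 2 ^ n * i ≤ 2 ^ (n + m) := by
    by_contra hlt
    have hlt' : sb (n + m) (2 ^ (n + m) - 2 ^ m * j) < sb (n + m) (2 ^ n * i) :=
      sb_strictMonoOn _ (by simp) (by simpa using hI) (by omega)
    rw [sb_two_pow_sub hJ, sb_two_pow_mul, add_comm n m, sb_two_pow_mul] at hlt'
    have : (1 : ℝ) - sb n j < sb m i := by exact_mod_cast hlt'
    linarith
  calc (j : ℝ) / 2 ^ n + i / 2 ^ m = ((2 ^ m * j + 2 ^ n * i : ℕ) : ℝ) / 2 ^ (n + m) := by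
        push_cast
        rw [pow_add]
        field_simp
    _ ≤ 1 := div_two_pow_le_one hsum

lemma questionMark_add_questionMark_one_sub_le (x : ℝ) :
    questionMark x + questionMark (1 - x) ≤ 1 := by
  suffices questionMark (1 - x) ≤ 1 - questionMark x by linarith
  refine questionMark_le (by linarith [questionMark_le_one x]) fun m i hi hix => ?_
  suffices questionMark x ≤ 1 - i / 2 ^ m by linarith
  refine questionMark_le (by linarith [div_two_pow_le_one hi]) fun n j hj hjx => ?_
  linarith [div_two_pow_add_div_two_pow_le_one hj hi (by linarith)]

lemma exists_sb_le_lt {x : ℝ} (n : ℕ) (h0 : 0 ≤ x) (h1 : x < 1) :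
    ∃ j < 2 ^ n, (sb n j : ℝ) ≤ x ∧ x < sb n (j + 1) := by
  classical
  have hex : ∃ k, x < sb n k := ⟨2 ^ n, by simpa using h1⟩
  have hk0 : Nat.find hex ≠ 0 := fun h => by
    have := Nat.find_spec hex
    rw [h, sb_apply_zero, Rat.cast_zero] at this
    linarith
  have hk : Nat.find hex ≤ 2 ^ n := Nat.find_min' hex (by simpa using h1)
  refine ⟨Nat.find hex - 1, by omega, not_lt.1 (Nat.find_min hex (by omega)), ?_⟩
  simpa [Nat.sub_add_cancel (Nat.pos_of_ne_zero hk0)] using Nat.find_spec hex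

lemma one_sub_half_pow_le_questionMark_add {x : ℝ} (n : ℕ) (h0 : 0 ≤ x) (h1 : x < 1) :
    1 - (1 / 2) ^ n ≤ questionMark x + questionMark (1 - x) := by
  obtain ⟨j, hj, hjx, hxj⟩ := exists_sb_le_lt n h0 h1
  have hleft := le_questionMark hj.le hjx
  have hright := le_questionMark (x := 1 - x) (Nat.sub_le (2 ^ n) (j + 1))
    (by rw [sb_two_pow_sub hj]; push_cast; linarith)
  rw [Nat.cast_sub hj, Nat.cast_add_one, Nat.cast_pow, Nat.cast_ofNat] at hright
  calc 1 - (1 / 2 : ℝ) ^ n = (j : ℝ) / 2 ^ n + (2 ^ n - (j + 1)) / 2 ^ n := by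
        rw [div_pow, one_pow]
        field_simp
        ring
    _ ≤ _ := add_le_add hleft hright

lemma one_le_questionMark_add_questionMark_one_sub {x : ℝ} (h0 : 0 ≤ x) :
    1 ≤ questionMark x + questionMark (1 - x) := by
  rcases lt_or_ge x 1 with h1 | h1
  · have hlim : Filter.Tendsto (fun n : ℕ => 1 - (1 / 2 : ℝ) ^ n) Filter.atTop (nhds 1) := by
      simpa using (tendsto_pow_atTop_nhds_zero_of_lt_one (by norm_num) (by norm_num :
        (1 / 2 : ℝ) < 1)).const_sub 1
    exact le_of_tendsto' hlim fun n => one_sub_half_pow_le_questionMark_add n h0 h1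
  · have := le_questionMark (n := 0) (j := 1) le_rfl (by simpa [sb] using h1)
    linarith [questionMark_nonneg (1 - x)]

lemma questionMark_one_sub {x : ℝ} (hx : 0 ≤ x) : questionMark (1 - x) = 1 - questionMark x := by
  linarith [questionMark_add_questionMark_one_sub_le x,
    one_le_questionMark_add_questionMark_one_sub hx]

lemma div_one_add_le_div_one_add_iff {a b : ℝ} (ha : 0 ≤ a) (hb : 0 ≤ b) :
    a / (1 + a) ≤ b / (1 + b) ↔ a ≤ b := by
  rw [div_le_div_iff₀ (by positivity) (by positivity)]
  constructor <;> intro h <;> linarith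

lemma cast_sb_succ_of_le {n j : ℕ} (hj : j ≤ 2 ^ n) :
    (sb (n + 1) j : ℝ) = sb n j / (1 + sb n j) := by
  rw [sb_succ_of_le hj]
  push_cast
  rfl

lemma questionMark_div_one_add {x : ℝ} (hx0 : 0 ≤ x) (hx1 : x ≤ 1) :
    questionMark (x / (1 + x)) = questionMark x / 2 := by
  apply le_antisymm
  · refine questionMark_le_of_succ (by linarith [questionMark_nonneg x]) fun n j hj hjx => ?_
    -- `x / (1 + x) ≤ 1/2 = ξ_{2^n, n+1}`: only the left half of `F_{n+1}` is involved.
    have hmid : (sb (n + 1) (2 ^ n) : ℝ) = 1 / 2 := by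
      rw [cast_sb_succ_of_le le_rfl, sb_apply_two_pow]
      norm_num
    have hj' : j ≤ 2 ^ n := by
      rw [← (sb_strictMonoOn (n + 1)).le_iff_le hj (by simp [pow_succ])]
      have : (sb (n + 1) j : ℝ) ≤ sb (n + 1) (2 ^ n) := by
        rw [hmid]
        refine hjx.trans ?_
        rw [div_le_iff₀ (by positivity)]
        linarith
      exact_mod_cast this
    rw [cast_sb_succ_of_le hj', div_one_add_le_div_one_add_iff (by exact_mod_cast sb_nonneg n j)
      hx0] at hjx
    rw [pow_succ, ← div_div]
    linarith [le_questionMark hj' hjx]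
  · suffices questionMark x ≤ 2 * questionMark (x / (1 + x)) by linarith
    refine questionMark_le (by linarith [questionMark_nonneg (x / (1 + x))]) fun n j hj hjx => ?_
    have := le_questionMark (x := x / (1 + x)) (n := n + 1) (j := j)
      (hj.trans (Nat.pow_le_pow_right two_pos n.le_succ))
      (by rwa [cast_sb_succ_of_le hj, div_one_add_le_div_one_add_iff
        (by exact_mod_cast sb_nonneg n j) hx0])
    rw [pow_succ, ← div_div] at this
    linarith

lemma questionMark_one_div_one_add {u : ℝ} (hu0 : 0 ≤ u) (hu1 : u ≤ 1) :
    questionMark (1 / (1 + u)) = 1 - questionMark u / 2 := by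
  rw [show 1 / (1 + u) = 1 - u / (1 + u) by field_simp; ring,
    questionMark_one_sub (by positivity), questionMark_div_one_add hu0 hu1]

lemma questionMark_one_div_two_sub {u : ℝ} (hu0 : 0 ≤ u) (hu1 : u ≤ 1) :
    questionMark (1 / (2 - u)) = (1 + questionMark u) / 2 := by
  have h : 1 / (2 - u) = 1 - (1 - u) / (1 + (1 - u)) := by
    rw [show 1 + (1 - u) = 2 - u by ring]
    field_simp [show 2 - u ≠ 0 by linarith]
    ring
  rw [h, questionMark_one_sub (div_nonneg (by linarith) (by linarith)),
    questionMark_div_one_add (by linarith) (by linarith), questionMark_one_sub hu0]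
  ring

section Integral

open MeasureTheory intervalIntegral

lemma hasDerivAt_one_div_sub {c u : ℝ} (hu : u ≠ c) :
    HasDerivAt (fun u => 1 / (c - u)) (1 / (c - u) ^ 2) u := by
  simpa only [one_div, id, neg_neg] using
    ((hasDerivAt_id u).const_sub c).fun_inv (sub_ne_zero.2 hu.symm)

lemma hasDerivAt_one_div_add {c u : ℝ} (hu : u ≠ -c) :
    HasDerivAt (fun u => 1 / (c + u)) (-(1 / (c + u) ^ 2)) u := by
  have hcu : c + u ≠ 0 := fun h => hu (by linarith)
  simpa only [one_div, id, neg_div] using ((hasDerivAt_id u).const_add c).fun_inv hcu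

variable {F : ℝ → ℝ} {a b c : ℝ}

lemma continuousOn_one_div_sub (hc : c ∉ uIcc a b) :
    ContinuousOn (fun u => 1 / (c - u)) (uIcc a b) := fun _ hu =>
  (hasDerivAt_one_div_sub (ne_of_mem_of_not_mem hu hc)).continuousAt.continuousWithinAt

lemma continuousOn_one_div_add (hc : -c ∉ uIcc a b) :
    ContinuousOn (fun u => 1 / (c + u)) (uIcc a b) := fun _ hu =>
  (hasDerivAt_one_div_add (ne_of_mem_of_not_mem hu hc)).continuousAt.continuousWithinAt

lemma integral_comp_one_div_sub_div_sq (hc : c ∉ uIcc a b) :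
    ∫ u in a..b, F (1 / (c - u)) / (c - u) ^ 2 = ∫ x in 1 / (c - a)..1 / (c - b), F x := by
  have h := integral_comp_mul_deriv_of_deriv_nonneg (g := F) (continuousOn_one_div_sub hc)
    (fun x hx => hasDerivAt_one_div_sub (ne_of_mem_of_not_mem (Ioo_subset_Icc_self hx) hc))
    (fun x _ => by positivity)
  simpa only [Function.comp_apply, ← div_eq_mul_one_div] using h

lemma intervalIntegrable_comp_one_div_sub_div_sq (hc : c ∉ uIcc a b)
    (hF : IntervalIntegrable F volume (1 / (c - a)) (1 / (c - b))) :
    IntervalIntegrable (fun u => F (1 / (c - u)) / (c - u) ^ 2) volume a b := by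
  have h := (integrable_comp_mul_deriv_iff_of_deriv_nonneg (g := F) (continuousOn_one_div_sub hc)
    (fun x hx => hasDerivAt_one_div_sub (ne_of_mem_of_not_mem (Ioo_subset_Icc_self hx) hc))
    (fun x _ => by positivity)).2 hF
  simpa only [Function.comp_apply, ← div_eq_mul_one_div] using h

lemma integral_comp_one_div_add_div_sq (hc : -c ∉ uIcc a b) :
    ∫ u in a..b, F (1 / (c + u)) / (c + u) ^ 2 = ∫ x in 1 / (c + b)..1 / (c + a), F x := by
  have h := integral_comp_mul_deriv_of_deriv_nonpos (g := F) (continuousOn_one_div_add hc)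
    (fun x hx => hasDerivAt_one_div_add (ne_of_mem_of_not_mem (Ioo_subset_Icc_self hx) hc))
    (fun x _ => by simp only [Left.neg_nonpos_iff]; positivity)
  rw [integral_symm (1 / (c + a)), ← h, ← intervalIntegral.integral_neg]
  simp only [Function.comp_apply, mul_neg, neg_neg, ← div_eq_mul_one_div]

lemma intervalIntegrable_comp_one_div_add_div_sq (hc : -c ∉ uIcc a b)
    (hF : IntervalIntegrable F volume (1 / (c + b)) (1 / (c + a))) :
    IntervalIntegrable (fun u => F (1 / (c + u)) / (c + u) ^ 2) volume a b := by
  have h := (integrable_comp_mul_deriv_iff_of_deriv_nonpos (g := F) (continuousOn_one_div_add hc)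
    (fun x hx => hasDerivAt_one_div_add (ne_of_mem_of_not_mem (Ioo_subset_Icc_self hx) hc))
    (fun x _ => by simp only [Left.neg_nonpos_iff]; positivity)).2 hF.symm
  simpa only [Function.comp_apply, mul_neg, Pi.neg_def, neg_neg, ← div_eq_mul_one_div]
    using h.neg

lemma integral_half_one_eq_integral_comp_mobius (hF : IntervalIntegrable F volume (1 / 2) 1) :
    ∫ x in (1 / 2 : ℝ)..1, F x =
      ∫ u in (1 / 2 : ℝ)..1, (F (1 / (2 - u)) / (2 - u) ^ 2 + F (1 / (1 + u)) / (1 + u) ^ 2) := by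
  have h2 : (2 : ℝ) ∉ uIcc (1 / 2) 1 := by rw [uIcc_of_le (by norm_num)]; norm_num
  have h1 : -(1 : ℝ) ∉ uIcc (1 / 2) 1 := by rw [uIcc_of_le (by norm_num)]; norm_num
  have hmid : (2 / 3 : ℝ) ∈ uIcc (1 / 2) 1 := by rw [uIcc_of_le (by norm_num)]; norm_num
  have hleft : IntervalIntegrable F volume (1 / 2) (2 / 3) :=
    hF.mono_set (uIcc_subset_uIcc left_mem_uIcc hmid)
  have hright : IntervalIntegrable F volume (2 / 3) 1 :=
    hF.mono_set (uIcc_subset_uIcc hmid right_mem_uIcc)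
  rw [integral_add (intervalIntegrable_comp_one_div_sub_div_sq h2 (by norm_num; exact hright))
      (intervalIntegrable_comp_one_div_add_div_sq h1 (by norm_num; exact hleft)),
    integral_comp_one_div_sub_div_sq h2, integral_comp_one_div_add_div_sq h1]
  norm_num
  rw [add_comm, integral_add_adjacent_intervals hleft hright]

lemma continuousOn_T {g : ℝ → ℝ} (hg : ContinuousOn g (Icc (1 / 2) 1)) :
    ContinuousOn (T g) (Icc (1 / 2) 1) := by
  have h2 : ∀ u ∈ Icc (1 / 2 : ℝ) 1, 0 < 2 - u := fun u hu => by linarith [hu.2]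
  have h1 : ∀ u ∈ Icc (1 / 2 : ℝ) 1, 0 < 1 + u := fun u hu => by linarith [hu.1]
  have hmaps2 : MapsTo (fun u : ℝ => 1 / (2 - u)) (Icc (1 / 2) 1) (Icc (1 / 2) 1) :=
    fun u hu => by
      rw [mem_Icc, le_div_iff₀ (h2 u hu), div_le_one (h2 u hu)]
      constructor <;> linarith [hu.1, hu.2]
  have hmaps1 : MapsTo (fun u : ℝ => 1 / (1 + u)) (Icc (1 / 2) 1) (Icc (1 / 2) 1) :=
    fun u hu => by
      rw [mem_Icc, le_div_iff₀ (h1 u hu), div_le_one (h1 u hu)]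
      constructor <;> linarith [hu.1, hu.2]
  refine ContinuousOn.sub ?_ ?_
  · exact (hg.comp (continuousOn_const.div (by fun_prop) fun u hu => (h2 u hu).ne') hmaps2).div
      (by fun_prop) fun u hu => (pow_pos (h2 u hu) 2).ne'
  · exact (hg.comp (continuousOn_const.div (by fun_prop) fun u hu => (h1 u hu).ne') hmaps1).div
      (by fun_prop) fun u hu => (pow_pos (h1 u hu) 2).ne'

lemma integral_comp_two_mul_questionMark_mul {h g : ℝ → ℝ} {C : ℝ} (hodd : Function.Odd h)
    (hper : Function.Periodic h 1) (hmeas : Measurable h) (hbd : ∀ x, |h x| ≤ C)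
    (hg : ContinuousOn g (Icc (1 / 2) 1)) :
    ∫ x in (1 / 2 : ℝ)..1, h (2 * questionMark x) * g x =
      ∫ x in (1 / 2 : ℝ)..1, h (questionMark x) * T g x := by
  have hint : IntervalIntegrable (fun x => h (2 * questionMark x)) volume (1 / 2) 1 := by
    rw [intervalIntegrable_iff]
    exact Measure.integrableOn_of_bounded measure_Ioc_lt_top.ne
      (hmeas.comp (questionMark_mono.measurable.const_mul 2)).aestronglyMeasurable
      (ae_of_all _ fun x => hbd _)
  rw [integral_half_one_eq_integral_comp_mobius
    (hint.mul_continuousOn (by rwa [uIcc_of_le (by norm_num)]))]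
  refine integral_congr fun u hu => ?_
  rw [uIcc_of_le (by norm_num)] at hu
  have hu0 : 0 ≤ u := by linarith [hu.1]
  simp only [T, questionMark_one_div_two_sub hu0 hu.2, questionMark_one_div_one_add hu0 hu.2]
  rw [show 2 * ((1 + questionMark u) / 2) = questionMark u + 1 by ring, hper,
    show 2 * (1 - questionMark u / 2) = -questionMark u + 1 + 1 by ring, hper, hper, hodd]
  ring

lemma measurable_of_continuousAt_of_forall_ne_add_int {f : ℝ → ℝ} {S : Set ℝ} (hS : S.Countable)
    (hf : ∀ x : ℝ, (∀ s ∈ S, ∀ k : ℤ, x ≠ s + k) → ContinuousAt f x) : Measurable f := by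
  refine (StronglyMeasurable.of_countable_not_continuousAt ?_).measurable
  refine (hS.biUnion fun s _ => countable_range fun k : ℤ => s + k).mono fun x hx => ?_
  by_contra hmem
  simp only [mem_iUnion, mem_range, not_exists] at hmem
  exact hx (hf x fun s hs k hxk => hmem s hs k hxk.symm)

end Integral

/-- Lemma 1: if `j` is a 1-periodic, odd, bounded, piecewise continuous function
and `f₀` is continuous on `[1/2,1]`, then for every `n ≥ 0`,
`∫_{1/2}^1 j(2^n ?(x)) f₀(x) dx = ∫_{1/2}^1 j(?(x)) f_n(x) dx`,
where `f_n = T^n f₀` and `?` is the Minkowski question mark function. -/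
theorem integral_j_questionMark (j : ℝ → ℝ)
    (hper : ∀ x, j (x + 1) = j x)
    (hodd : ∀ x, j (-x) = -j x)
    (hbd : ∃ C, ∀ x, |j x| ≤ C)
    (hpc : ∃ S : Finset ℝ, ∀ x : ℝ, (∀ s ∈ S, ∀ k : ℤ, x ≠ s + k) → ContinuousAt j x)
    (f₀ : ℝ → ℝ) (hf₀ : ContinuousOn f₀ (Set.Icc (1 / 2 : ℝ) 1)) (n : ℕ) :
    ∫ x in (1 / 2 : ℝ)..1, j (2 ^ n * questionMark x) * f₀ x =
      ∫ x in (1 / 2 : ℝ)..1, j (questionMark x) * (T^[n] f₀) x := by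
  obtain ⟨C, hC⟩ := hbd
  obtain ⟨S, hS⟩ := hpc
  have hmeas := measurable_of_continuousAt_of_forall_ne_add_int S.countable_toSet hS
  induction n generalizing f₀ with
  | zero => simp
  | succ n ih =>
    have hoddn : Function.Odd fun x => j (2 ^ n * x) := fun x => by simp only [mul_neg, hodd]
    have hpern : Function.Periodic (fun x => j (2 ^ n * x)) 1 := fun x => by
      simpa [mul_add] using Function.Periodic.nat_mul hper (2 ^ n) (2 ^ n * x)
    calc ∫ x in (1 / 2 : ℝ)..1, j (2 ^ (n + 1) * questionMark x) * f₀ x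
        = ∫ x in (1 / 2 : ℝ)..1, j (2 ^ n * (2 * questionMark x)) * f₀ x := by
          simp only [pow_succ, mul_assoc]
      _ = ∫ x in (1 / 2 : ℝ)..1, j (2 ^ n * questionMark x) * T f₀ x :=
          integral_comp_two_mul_questionMark_mul hoddn hpern (hmeas.comp (measurable_const_mul _))
            (fun _ => hC _) hf₀
      _ = _ := ih (T f₀) (continuousOn_T hf₀)
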